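/- arXiv:2602.18621 — 7 statements merged into one kernel-verified Lean document; each statement's English description precedes it below -/
import Mathlib

section
/- For all integers p ≥ 1 and s1, s2 ≥ 1, one has t(p,s1,s2) = t(p,s2,s1); that is, the quantity 2^{s2−1}·(2·b^{(s1)}_{2p−3} + s2·b^{(s1)}_{2p−4}) is symmetric in s1 and s2. -/
/-- Shifted sequence `bSeq s1 n = b^{(s1)}_{n-2}`. -/
def bSeq (s1 : ℕ) : ℕ → ℤ
  | 0 => 2 ^ s1
  | 1 => if s1 = 0 then 1 else 2 ^ (s1 - 1) * (s1 + 2)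
  | n + 2 => bSeq s1 (n + 1) + bSeq s1 n


/-- `tVal p s1 s2 = 2^{s2-1} (2 b^{(s1)}_{2p-3} + s2 b^{(s1)}_{2p-4})`. -/
def tVal (p s1 s2 : ℕ) : ℤ :=
  2 ^ (s2 - 1) * (2 * bSeq s1 (2 * p - 1) + (s2 : ℤ) * bSeq s1 (2 * p - 2))

lemma bSeq_closed (s : ℕ) (hs : 1 ≤ s) :
    ∀ n, bSeq s n = 2 ^ (s - 1) * (2 * (Nat.fib (n + 1) : ℤ) + (s : ℤ) * (Nat.fib n : ℤ)) := by
  intro n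
  induction n using Nat.twoStepInduction with
  | zero =>
    simp [bSeq]
    rw [show (2:ℤ)^s = 2^(s-1)*2 by rw [← pow_succ]; congr 1; omega]
  | one =>
    have : s ≠ 0 := by omega
    simp [bSeq, this, Nat.fib]
    ring
  | more n ih2 ih1 =>
    show bSeq s (n+1) + bSeq s n = _
    rw [ih1, ih2]
    simp only [Nat.fib_add_two]
    push_cast
    ring

/-- For all integers `p ≥ 1` and `s1, s2 ≥ 1`, one has
`t(p,s1,s2) = t(p,s2,s1)`. -/
theorem tVal_symm (p s1 s2 : ℕ) (hp : 1 ≤ p) (hs1 : 1 ≤ s1) (hs2 : 1 ≤ s2) :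
    tVal p s1 s2 = tVal p s2 s1 := by
  have hm : 2 * p - 1 = (2 * p - 2) + 1 := by omega
  unfold tVal
  rw [hm, bSeq_closed s1 hs1, bSeq_closed s1 hs1, bSeq_closed s2 hs2, bSeq_closed s2 hs2,
    Nat.fib_add_two]
  push_cast
  ring
end

section
/- For all integers p ≥ 1 and s1, s2 ≥ 1, the power 2^{s1+s2−2} divides t(p,s1,s2); equivalently, 2^{s1−1} divides 2·b^{(s1)}_{2p−3} + s2·b^{(s1)}_{2p−4}. -/
lemma pow_dvd_bSeq (s1 : ℕ) (hs1 : 1 ≤ s1) : ∀ n, (2 : ℤ) ^ (s1 - 1) ∣ bSeq s1 n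
  | 0 => by
    rw [bSeq]
    exact pow_dvd_pow 2 (Nat.sub_le s1 1)
  | 1 => by
    rw [bSeq, if_neg (by omega)]
    exact Dvd.intro _ rfl
  | n + 2 => by
    rw [bSeq]
    exact dvd_add (pow_dvd_bSeq s1 hs1 (n + 1)) (pow_dvd_bSeq s1 hs1 n)

/-- For all integers `p ≥ 1` and `s1, s2 ≥ 1`, the power
`2^{s1+s2-2}` divides `t(p,s1,s2)`. -/
theorem pow_two_dvd_tVal (p s1 s2 : ℕ) (hp : 1 ≤ p) (hs1 : 1 ≤ s1) (hs2 : 1 ≤ s2) :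
    (2 : ℤ) ^ (s1 + s2 - 2) ∣ tVal p s1 s2 := by
  have h : s1 + s2 - 2 = (s2 - 1) + (s1 - 1) := by omega
  rw [h, pow_add, tVal]
  exact mul_dvd_mul_left _ (dvd_add (Dvd.dvd.mul_left (pow_dvd_bSeq s1 hs1 _) 2)
    (Dvd.dvd.mul_left (pow_dvd_bSeq s1 hs1 _) _))
end

section
/- For every integer p ≥ 2, the sandpile group K(Cone(T_p)) of the cone over the left comb tree T_p, i.e. the cokernel of the reduced Laplacian of Cone(T_p), is a cyclic abelian group (it can be generated by a single element), while the tree T_p has exactly p leaves. -/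
/-- The cone over a graph: add a new vertex `none` adjacent to everything. -/
def coneGraph {V : Type*} (G : SimpleGraph V) : SimpleGraph (Option V) :=
  SimpleGraph.fromRel (fun u v =>
    u = none ∨ ∃ a b, u = some a ∧ v = some b ∧ G.Adj a b)


open scoped Classical in
/-- The reduced Laplacian of the cone over `G`, with respect to the cone vertex:
the Laplacian matrix `D - A` of `coneGraph G` with the row and column of the
cone vertex deleted. -/
noncomputable def reducedLap {V : Type*} [Fintype V] (G : SimpleGraph V) :
    Matrix V V ℤ :=
  ((coneGraph G).lapMatrix ℤ).submatrix some some


/-- The left comb tree `T_p` on `2p-1` vertices: `Sum.inl i` is the spine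
vertex `π_{i+1}` (for `i < p`) and `Sum.inr j` is the leaf `ℓ_{j+1}`
(for `j < p-1`), with edges `π_i – π_{i+1}` and `π_{j+1} – ℓ_j`. -/
def combTree (p : ℕ) : SimpleGraph (Fin p ⊕ Fin (p - 1)) :=
  SimpleGraph.fromRel (fun u v =>
    match u, v with
    | Sum.inl i, Sum.inl j => (i : ℕ) + 1 = (j : ℕ)
    | Sum.inl i, Sum.inr j => (i : ℕ) = (j : ℕ) + 1
    | _, _ => False)

/-! Modulo the class of `π_1`, the toppling relations of `Cone(T_p)` make the sandpile group
2-divisible: `2 ℓ_k = π_{k+1}` makes every spine class twice a leaf class, and the relation at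
`π_{k+1}` then makes `ℓ_k` twice something as well. Read upwards from `π_1 = 0`, the same
relations show that `2^k` kills `π_k` and `ℓ_k`. A 2-divisible group killed by `2^p` is trivial,
so the class of `π_1` generates the sandpile group. -/

open scoped Matrix

theorem subsingleton_of_surjective_smul_of_pow_smul_eq_zero {R M : Type*} [Monoid R] [Zero M]
    [MulAction R M] (a : R) (n : ℕ) (hsurj : Function.Surjective (a • · : M → M))
    (hnil : ∀ z : M, a ^ n • z = 0) : Subsingleton M := by
  have hpow : ∀ m, Function.Surjective (a ^ m • · : M → M) := by
    intro m
    induction m with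
    | zero => exact fun z => ⟨z, by simp⟩
    | succ m ih =>
      convert ih.comp hsurj using 1
      ext z
      simp [pow_succ, mul_smul]
  refine subsingleton_of_forall_eq 0 fun z => ?_
  obtain ⟨w, rfl⟩ := hpow n z
  exact hnil w

theorem LinearMap.range_le_of_forall_single_mem {R M ι : Type*} [Semiring R] [AddCommMonoid M]
    [Module R M] [Fintype ι] [DecidableEq ι] (f : (ι → R) →ₗ[R] M) {K : Submodule R M}
    (h : ∀ i, f (Pi.single i 1) ∈ K) : LinearMap.range f ≤ K := by
  rw [LinearMap.range_eq_map, ← (Pi.basisFun R ι).span_eq, Submodule.map_span_le]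
  rintro _ ⟨i, rfl⟩
  simpa using h i

theorem isAddCyclic_quotient_of_sup_span_singleton_eq_top {M : Type*} [AddCommGroup M]
    {S : Submodule ℤ M} {g : M} (h : S ⊔ Submodule.span ℤ {g} = ⊤) : IsAddCyclic (M ⧸ S) := by
  refine ⟨⟨Submodule.Quotient.mk g, ?_⟩⟩
  intro z
  obtain ⟨x, rfl⟩ := Submodule.Quotient.mk_surjective S z
  obtain ⟨s, hs, t, ht, rfl⟩ := Submodule.mem_sup.mp (h ▸ Submodule.mem_top : x ∈ S ⊔ _)
  obtain ⟨c, rfl⟩ := Submodule.mem_span_singleton.mp ht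
  refine ⟨c, ?_⟩
  simp [(Submodule.Quotient.mk_eq_zero S).mpr hs]

section Cone

variable {V : Type*} (G : SimpleGraph V)

@[simp]
theorem coneGraph_adj_some_some {a b : V} : (coneGraph G).Adj (some a) (some b) ↔ G.Adj a b := by
  simpa [coneGraph, G.adj_comm b a] using fun h => G.ne_of_adj h

@[simp]
theorem coneGraph_adj_some_none (a : V) : (coneGraph G).Adj (some a) none := by
  simp [coneGraph]

open scoped Classical in
theorem coneGraph_degree_some [Fintype V] (a : V) :
    (coneGraph G).degree (some a) = Nat.card {w // G.Adj a w} + 1 := by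
  have : (coneGraph G).neighborSet (some a) = insert none (some '' {w | G.Adj a w}) := by
    ext (_ | w) <;> simp [SimpleGraph.mem_neighborSet]
  rw [← SimpleGraph.card_neighborSet_eq_degree, ← Nat.card_eq_fintype_card, this,
    Nat.card_coe_set_eq, Set.ncard_insert_of_notMem (by simp),
    Set.ncard_image_of_injective _ (Option.some_injective V)]
  rfl

open scoped Classical in
theorem reducedLap_apply [Fintype V] (u v : V) :
    reducedLap G u v =
      (if u = v then (Nat.card {w // G.Adj u w} + 1 : ℤ) else 0) - if G.Adj u v then 1 else 0 := by
  simp [reducedLap, SimpleGraph.lapMatrix, SimpleGraph.degMatrix, Matrix.diagonal_apply,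
    SimpleGraph.adjMatrix_apply, coneGraph_degree_some]

end Cone

section CombTree

variable {p : ℕ}

@[simp]
theorem combTree_adj_inl_inl {i j : Fin p} :
    (combTree p).Adj (.inl i) (.inl j) ↔ (i : ℕ) + 1 = j ∨ (j : ℕ) + 1 = i := by
  simp only [combTree, SimpleGraph.fromRel_adj, ne_eq, Sum.inl.injEq, and_iff_right_iff_imp]
  rintro h rfl
  omega

@[simp]
theorem combTree_adj_inl_inr {i : Fin p} {j : Fin (p - 1)} :
    (combTree p).Adj (.inl i) (.inr j) ↔ (i : ℕ) = j + 1 := by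
  simp [combTree]

@[simp]
theorem combTree_adj_inr_inl {i : Fin p} {j : Fin (p - 1)} :
    (combTree p).Adj (.inr j) (.inl i) ↔ (i : ℕ) = j + 1 := by
  simp [combTree]

@[simp]
theorem combTree_not_adj_inr_inr {j k : Fin (p - 1)} : ¬ (combTree p).Adj (.inr j) (.inr k) := by
  simp [combTree]

theorem combTree_card_adj_inr (j : Fin (p - 1)) :
    Nat.card {w // (combTree p).Adj (.inr j) w} = 1 := by
  rw [Nat.card_eq_one_iff_exists]
  refine ⟨⟨.inl ⟨j + 1, by omega⟩, by simp⟩, ?_⟩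
  rintro ⟨i | k, h⟩
  · simp only [combTree_adj_inr_inl] at h
    simp [Fin.ext_iff, h]
  · exact absurd h combTree_not_adj_inr_inr

open scoped Classical in
theorem combTree_card_adj_inl (hp : 2 ≤ p) (i : Fin p) :
    Nat.card {w // (combTree p).Adj (.inl i) w} =
      if (i : ℕ) = 0 then 1 else if (i : ℕ) + 1 = p then 2 else 3 := by
  obtain ⟨i, hi⟩ := i
  rw [Nat.card_eq_fintype_card, Fintype.card_subtype]
  dsimp only
  split_ifs with h0 hl
  · rw [Finset.card_eq_one]
    refine ⟨.inl ⟨1, by omega⟩, ?_⟩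
    ext (⟨k, hk⟩ | ⟨k, hk⟩) <;> simp [Fin.ext_iff] <;> omega
  · rw [Finset.card_eq_two]
    refine ⟨.inl ⟨i - 1, by omega⟩, .inr ⟨i - 1, by omega⟩, by simp, ?_⟩
    ext (⟨k, hk⟩ | ⟨k, hk⟩) <;> simp [Fin.ext_iff] <;> omega
  · rw [Finset.card_eq_three]
    refine ⟨.inl ⟨i - 1, by omega⟩, .inl ⟨i + 1, by omega⟩, .inr ⟨i - 1, by omega⟩,
      by simp [Fin.ext_iff], by simp, by simp, ?_⟩
    ext (⟨k, hk⟩ | ⟨k, hk⟩) <;> simp [Fin.ext_iff] <;> omega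

theorem combTree_card_leaves (hp : 2 ≤ p) :
    Nat.card {v : Fin p ⊕ Fin (p - 1) // Nat.card {w // (combTree p).Adj v w} = 1} = p := by
  have hspine (i : Fin p) : Nat.card {w // (combTree p).Adj (.inl i) w} = 1 ↔ (i : ℕ) = 0 := by
    rw [combTree_card_adj_inl hp]
    split_ifs <;> simp_all
  have h0 : Nat.card {i : Fin p // (i : ℕ) = 0} = 1 :=
    Nat.card_eq_one_iff_exists.mpr ⟨⟨⟨0, by omega⟩, rfl⟩, fun ⟨i, hi⟩ => by ext; simpa using hi⟩
  rw [Nat.card_congr Equiv.subtypeSum, Nat.card_sum]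
  simp only [hspine, combTree_card_adj_inr, h0]
  simp only [Nat.card_eq_fintype_card, Fintype.card_subtype_true, Fintype.card_fin]
  omega

end CombTree

section CombVectors

variable {p : ℕ}

/-- `combSpine p k` and `combLeaf p k` are the basis vectors of `π_k` and `ℓ_k`, indexed from 1
as in the paper; out of range they are `0`. -/
def combSpine (p k : ℕ) : Fin p ⊕ Fin (p - 1) → ℤ :=
  Sum.elim (fun i => if (i : ℕ) + 1 = k then 1 else 0) 0

def combLeaf (p k : ℕ) : Fin p ⊕ Fin (p - 1) → ℤ :=
  Sum.elim 0 (fun j => if (j : ℕ) + 1 = k then 1 else 0)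

theorem single_inl_eq_combSpine (i : Fin p) : Pi.single (.inl i) 1 = combSpine p (i + 1) := by
  ext (k | k) <;> simp [combSpine, Pi.single_apply, Fin.ext_iff, eq_comm]

theorem single_inr_eq_combLeaf (j : Fin (p - 1)) : Pi.single (.inr j) 1 = combLeaf p (j + 1) := by
  ext (k | k) <;> simp [combLeaf, Pi.single_apply, Fin.ext_iff, eq_comm]

theorem reducedLap_combTree_mulVec_combLeaf {k : ℕ} (hk : 1 ≤ k) (hkp : k < p) :
    reducedLap (combTree p) *ᵥ combLeaf p k = 2 • combLeaf p k - combSpine p (k + 1) := by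
  obtain ⟨j, rfl⟩ : ∃ j, k = j + 1 := ⟨k - 1, by omega⟩
  rw [← single_inr_eq_combLeaf ⟨j, by omega⟩, Matrix.mulVec_single_one, single_inr_eq_combLeaf]
  ext (i | i) <;> simp [reducedLap_apply, combTree_card_adj_inr, combSpine, combLeaf, Fin.ext_iff]

theorem reducedLap_combTree_mulVec_combSpine_one (hp : 2 ≤ p) :
    reducedLap (combTree p) *ᵥ combSpine p 1 = 2 • combSpine p 1 - combSpine p 2 := by
  rw [← single_inl_eq_combSpine ⟨0, by omega⟩, Matrix.mulVec_single_one, single_inl_eq_combSpine]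
  ext (i | i) <;> simp [reducedLap_apply, combTree_card_adj_inl hp, combSpine, Fin.ext_iff]
  split_ifs <;> omega

theorem reducedLap_combTree_mulVec_combSpine_of_lt (hp : 2 ≤ p) {k : ℕ} (hk : 1 ≤ k)
    (hkp : k + 1 < p) :
    reducedLap (combTree p) *ᵥ combSpine p (k + 1) =
      4 • combSpine p (k + 1) - combSpine p k - combSpine p (k + 2) - combLeaf p k := by
  rw [← single_inl_eq_combSpine ⟨k, by omega⟩, Matrix.mulVec_single_one, single_inl_eq_combSpine]
  ext (i | i) <;> simp [reducedLap_apply, combTree_card_adj_inl hp, combSpine, combLeaf,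
    Fin.ext_iff] <;> split_ifs <;> omega

theorem reducedLap_combTree_mulVec_combSpine_of_eq (hp : 2 ≤ p) {k : ℕ} (hkp : k + 1 = p) :
    reducedLap (combTree p) *ᵥ combSpine p (k + 1) =
      3 • combSpine p (k + 1) - combSpine p k - combLeaf p k := by
  rw [← single_inl_eq_combSpine ⟨k, by omega⟩, Matrix.mulVec_single_one, single_inl_eq_combSpine]
  ext (i | i) <;> simp [reducedLap_apply, combTree_card_adj_inl hp, combSpine, combLeaf,
    Fin.ext_iff] <;> split_ifs <;> omega

end CombVectors

section Relations

variable {N : Type*} [AddCommGroup N] {p : ℕ} {x y : ℕ → N}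

/-- The toppling relations `(deg v + 1) [v] = ∑_{w ∼ v} [w]` of `Cone(T_p)`,
for `x k = [π_k]` and `y k = [ℓ_k]`. -/
structure CombRelations (p : ℕ) (x y : ℕ → N) : Prop where
  first : 2 • x 1 = x 2
  mid : ∀ k, 1 ≤ k → k + 1 < p → 4 • x (k + 1) = x k + x (k + 2) + y k
  last : ∀ k, k + 1 = p → 3 • x (k + 1) = x k + y k
  leaf : ∀ k, 1 ≤ k → k < p → 2 • y k = x (k + 1)

theorem CombRelations.two_pow_smul_eq_zero_of_lt (h : CombRelations p x y) (hx : x 1 = 0)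
    {k : ℕ} (hk : 1 ≤ k) (hkp : k < p) : 2 ^ k • x k = 0 ∧ 2 ^ k • y k = 0 := by
  induction k, hk using Nat.le_induction with
  | base =>
    refine ⟨by simp [hx], ?_⟩
    rw [pow_one, h.leaf 1 le_rfl hkp, ← h.first, hx, smul_zero]
  | succ k hk ih =>
    obtain ⟨hxk, hyk⟩ := ih (by omega)
    have hyx := h.leaf k hk (by omega)
    have hyx' := h.leaf (k + 1) (by omega) hkp
    constructor
    · linear_combination (norm := module) (-2 ^ (k + 1) : ℤ) • hyx + (4 : ℤ) • hyk
    · linear_combination (norm := module) (2 ^ k : ℤ) • hyx' - (2 ^ k : ℤ) • h.mid k hk hkp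
        - (2 ^ (k + 2) : ℤ) • hyx - hxk + (7 : ℤ) • hyk

theorem CombRelations.two_pow_smul_eq_zero (h : CombRelations p x y) (hx : x 1 = 0) :
    (∀ k, 1 ≤ k → k ≤ p → 2 ^ p • x k = 0) ∧ ∀ k, 1 ≤ k → k < p → 2 ^ p • y k = 0 := by
  have hle {z : N} {k : ℕ} (hkp : k ≤ p) (hz : 2 ^ k • z = 0) : 2 ^ p • z = 0 := by
    rw [← Nat.sub_add_cancel hkp, pow_add, mul_smul, hz, smul_zero]
  refine ⟨fun k hk hkp => ?_, fun k hk hkp => hle hkp.le (h.two_pow_smul_eq_zero_of_lt hx hk hkp).2⟩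
  obtain hlt | rfl := hkp.lt_or_eq
  · exact hle hkp (h.two_pow_smul_eq_zero_of_lt hx hk hlt).1
  · obtain ⟨j, rfl⟩ : ∃ j, k = j + 1 := ⟨k - 1, by omega⟩
    rcases j.eq_zero_or_pos with rfl | hj
    · rw [hx, smul_zero]
    rw [← h.leaf j hj (by omega), smul_comm,
      hle (by omega) (h.two_pow_smul_eq_zero_of_lt hx hj (by omega)).2, smul_zero]

theorem CombRelations.exists_two_smul_eq_spine (h : CombRelations p x y) (hx : x 1 = 0) {k : ℕ}
    (hk : 1 ≤ k) (hkp : k ≤ p) : ∃ w, 2 • w = x k := by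
  obtain rfl | ⟨j, hj, rfl⟩ : k = 1 ∨ ∃ j, 1 ≤ j ∧ k = j + 1 := by
    rcases Nat.lt_or_ge 1 k with h | h
    · exact .inr ⟨k - 1, by omega, by omega⟩
    · exact .inl (by omega)
  · exact ⟨0, by rw [hx, smul_zero]⟩
  · exact ⟨y j, h.leaf j hj (by omega)⟩

theorem CombRelations.exists_two_smul_eq_leaf (h : CombRelations p x y) (hx : x 1 = 0) {k : ℕ}
    (hk : 1 ≤ k) (hkp : k < p) : ∃ w, 2 • w = y k := by
  obtain ⟨w, hw⟩ := h.exists_two_smul_eq_spine hx hk hkp.le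
  have hyx := h.leaf k hk hkp
  obtain hlt | heq : k + 1 < p ∨ k + 1 = p := by omega
  · have hyx' := h.leaf (k + 1) (by omega) hlt
    refine ⟨2 • x (k + 1) - w - y (k + 1), ?_⟩
    linear_combination (norm := module) h.mid k hk hlt - hw - hyx'
  · refine ⟨3 • y k - w, ?_⟩
    linear_combination (norm := module) h.last k heq + (3 : ℤ) • hyx - hw

end Relations

theorem combRelations_of_map_mulVec_eq_zero {N : Type*} [AddCommGroup N] {p : ℕ} (hp : 2 ≤ p)
    (f : (Fin p ⊕ Fin (p - 1) → ℤ) →ₗ[ℤ] N) (hf : ∀ v, f (reducedLap (combTree p) *ᵥ v) = 0) :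
    CombRelations p (fun k => f (combSpine p k)) (fun k => f (combLeaf p k)) where
  first := by
    have := hf (combSpine p 1)
    simp only [reducedLap_combTree_mulVec_combSpine_one hp, map_sub, map_nsmul] at this
    linear_combination (norm := module) this
  mid k hk hkp := by
    have := hf (combSpine p (k + 1))
    simp only [reducedLap_combTree_mulVec_combSpine_of_lt hp hk hkp, map_sub, map_nsmul] at this
    linear_combination (norm := module) this
  last k hkp := by
    have := hf (combSpine p (k + 1))
    simp only [reducedLap_combTree_mulVec_combSpine_of_eq hp hkp, map_sub, map_nsmul] at this
    linear_combination (norm := module) this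
  leaf k hk hkp := by
    have := hf (combLeaf p k)
    simp only [reducedLap_combTree_mulVec_combLeaf hk hkp, map_sub, map_nsmul] at this
    linear_combination (norm := module) this

theorem range_le_of_combSpine_combLeaf_mem {M : Type*} [AddCommGroup M] {p : ℕ}
    (f : (Fin p ⊕ Fin (p - 1) → ℤ) →ₗ[ℤ] M) {K : Submodule ℤ M}
    (hspine : ∀ k, 1 ≤ k → k ≤ p → f (combSpine p k) ∈ K)
    (hleaf : ∀ k, 1 ≤ k → k < p → f (combLeaf p k) ∈ K) : LinearMap.range f ≤ K := by
  refine f.range_le_of_forall_single_mem fun v => ?_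
  rcases v with i | j
  · rw [single_inl_eq_combSpine]
    exact hspine _ (by omega) i.isLt
  · rw [single_inr_eq_combLeaf]
    exact hleaf _ (by omega) (by omega)

theorem combTree_sup_span_combSpine_one_eq_top {p : ℕ} (hp : 2 ≤ p) :
    LinearMap.range (reducedLap (combTree p)).mulVecLin ⊔ Submodule.span ℤ {combSpine p 1} = ⊤ := by
  set S := LinearMap.range (reducedLap (combTree p)).mulVecLin ⊔ Submodule.span ℤ {combSpine p 1}
  have hrel := combRelations_of_map_mulVec_eq_zero hp S.mkQ fun v =>
    (Submodule.Quotient.mk_eq_zero S).mpr (Submodule.mem_sup_left ⟨v, rfl⟩)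
  have hx : S.mkQ (combSpine p 1) = 0 := (Submodule.Quotient.mk_eq_zero S).mpr
    (Submodule.mem_sup_right (Submodule.mem_span_singleton_self _))
  have hgen (K : Submodule ℤ (_ ⧸ S)) (hspine : ∀ k, 1 ≤ k → k ≤ p → S.mkQ (combSpine p k) ∈ K)
      (hleaf : ∀ k, 1 ≤ k → k < p → S.mkQ (combLeaf p k) ∈ K) (z : _ ⧸ S) : z ∈ K := by
    obtain ⟨x, rfl⟩ := S.mkQ_surjective z
    exact range_le_of_combSpine_combLeaf_mem S.mkQ hspine hleaf ⟨x, rfl⟩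
  have hdiv : Function.Surjective ((2 : ℕ) • · : _ ⧸ S → _ ⧸ S) := by
    refine hgen (LinearMap.range (2 • LinearMap.id)) (fun k hk hkp => ?_) (fun k hk hkp => ?_)
    · simpa using hrel.exists_two_smul_eq_spine hx hk hkp
    · simpa using hrel.exists_two_smul_eq_leaf hx hk hkp
  have hnil : ∀ z : _ ⧸ S, 2 ^ p • z = 0 := by
    refine hgen (LinearMap.ker ((2 ^ p : ℕ) • LinearMap.id)) (fun k hk hkp => ?_)
      (fun k hk hkp => ?_)
    · exact LinearMap.mem_ker.mpr ((hrel.two_pow_smul_eq_zero hx).1 k hk hkp)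
    · exact LinearMap.mem_ker.mpr ((hrel.two_pow_smul_eq_zero hx).2 k hk hkp)
  exact Submodule.Quotient.subsingleton_iff.mp
    (subsingleton_of_surjective_smul_of_pow_smul_eq_zero 2 p hdiv hnil)

/-- For every integer `p ≥ 2`, the sandpile group
`K(Cone(T_p))` of the cone over the left comb tree `T_p` (the cokernel of the
reduced Laplacian of `Cone(T_p)`) is cyclic, while the tree `T_p` has exactly
`p` leaves (vertices with exactly one neighbor). -/
theorem sandpile_cone_combTree_cyclic (p : ℕ) (hp : 2 ≤ p) :
    IsAddCyclic
      ((Fin p ⊕ Fin (p - 1) → ℤ) ⧸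
        LinearMap.range (reducedLap (combTree p)).mulVecLin) ∧
    Nat.card {v : Fin p ⊕ Fin (p - 1) //
      Nat.card {w // (combTree p).Adj v w} = 1} = p :=
  ⟨isAddCyclic_quotient_of_sup_span_singleton_eq_top (combTree_sup_span_combSpine_one_eq_top hp),
    combTree_card_leaves hp⟩
end

section
/- Let p ≥ 1 and s1, s2 ≥ 1 be integers, and let L̄ be the reduced Laplacian of Cone(T(p,s1,s2)) with respect to the cone vertex, a square integer matrix indexed by the p+s1+s2 vertices of T(p,s1,s2). Then for every i with 2 ≤ i ≤ p, the integer vector e_{π_1} − F_{2i−2}·e_{π_{i−1}} + F_{2i−4}·e_{π_i} lies in the ℤ-span of the columns of L̄ (equivalently, in the quotient ℤ^{V(T)}/im(L̄) one has [e_{π_1}] = F_{2i−2}·[e_{π_{i−1}}] − F_{2i−4}·[e_{π_i}]). -/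
/-- The bi-coconut tree `T(p,s1,s2)`: vertices `0,…,p-1` form a path (`π_i` is
vertex `i-1`), vertices `p,…,p+s1-1` are leaves attached to `π_1 = 0`, and
vertices `p+s1,…,p+s1+s2-1` are leaves attached to `π_p = p-1`. -/
def biCoconut (p s1 s2 : ℕ) : SimpleGraph (Fin (p + s1 + s2)) :=
  SimpleGraph.fromRel (fun u v =>
    ((u : ℕ) + 1 = (v : ℕ) ∧ (v : ℕ) < p) ∨
    ((u : ℕ) = 0 ∧ p ≤ (v : ℕ) ∧ (v : ℕ) < p + s1) ∨
    ((u : ℕ) = p - 1 ∧ p + s1 ≤ (v : ℕ)))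


lemma cone_adj_some {V : Type*} (G : SimpleGraph V) (u v : V) :
    (coneGraph G).Adj (some u) (some v) ↔ G.Adj u v := by
  simp only [coneGraph, SimpleGraph.fromRel_adj, ne_eq, Option.some.injEq]
  constructor
  · rintro ⟨h, h2 | h2⟩ <;> simp_all [SimpleGraph.adj_comm]
  · intro h; exact ⟨h.ne, Or.inl (by simp [h])⟩

lemma cone_adj_none {V : Type*} (G : SimpleGraph V) (u : V) :
    (coneGraph G).Adj (some u) none := by
  simp [coneGraph, SimpleGraph.fromRel_adj]

open scoped Classical in
lemma cone_degree {V : Type*} [Fintype V] (G : SimpleGraph V) (v : V) :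
    (coneGraph G).degree (some v) = G.degree v + 1 := by
  classical
  have h : (coneGraph G).neighborFinset (some v)
      = insert none ((G.neighborFinset v).image some) := by
    ext a
    cases a with
    | none =>
      simp only [SimpleGraph.mem_neighborFinset, Finset.mem_insert, Finset.mem_image]
      simp [cone_adj_none]
    | some b =>
      simp [SimpleGraph.mem_neighborFinset, cone_adj_some]
  rw [SimpleGraph.degree, h, Finset.card_insert_of_notMem (by simp),
    Finset.card_image_of_injective _ (Option.some_injective V)]
  rfl

open scoped Classical in
lemma reducedLap_eq {V : Type*} [Fintype V] (G : SimpleGraph V) :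
    reducedLap G = G.lapMatrix ℤ + 1 := by
  classical
  ext u v
  simp only [reducedLap, Matrix.submatrix_apply, SimpleGraph.lapMatrix,
    SimpleGraph.degMatrix, Matrix.sub_apply, Matrix.add_apply, Matrix.one_apply,
    Matrix.diagonal_apply, SimpleGraph.adjMatrix_apply, cone_adj_some,
    Option.some.injEq, cone_degree]
  by_cases h : u = v <;> simp [h]

lemma biCoconut_adj (p s1 s2 k : ℕ) (hk : 1 ≤ k) (hkp : k + 1 < p)
    (u w : Fin (p + s1 + s2)) (hw : (w : ℕ) = k) :
    (biCoconut p s1 s2).Adj u w ↔ ((u : ℕ) + 1 = k ∨ (u : ℕ) = k + 1) := by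
  simp only [biCoconut, SimpleGraph.fromRel_adj, ne_eq, Fin.ext_iff, hw]
  omega

open scoped Classical in
lemma biCoconut_degree (p s1 s2 k : ℕ) (hk : 1 ≤ k) (hkp : k + 1 < p)
    (w : Fin (p + s1 + s2)) (hw : (w : ℕ) = k) :
    (biCoconut p s1 s2).degree w = 2 := by
  classical
  have hb : k + 1 < p + s1 + s2 := by omega
  have h : (biCoconut p s1 s2).neighborFinset w
      = {(⟨k - 1, by omega⟩ : Fin (p + s1 + s2)), ⟨k + 1, hb⟩} := by
    ext a
    rw [SimpleGraph.mem_neighborFinset, SimpleGraph.adj_comm,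
      biCoconut_adj p s1 s2 k hk hkp a w hw]
    simp only [Finset.mem_insert, Finset.mem_singleton, Fin.ext_iff]
    omega
  rw [SimpleGraph.degree, h, Finset.card_insert_of_notMem (by simp only [Finset.mem_singleton, Fin.ext_iff]; omega),
    Finset.card_singleton]

open scoped Classical in
lemma reducedLap_col (p s1 s2 k : ℕ) (hk : 1 ≤ k) (hkp : k + 1 < p)
    (w a b : Fin (p + s1 + s2)) (hw : (w : ℕ) = k) (ha : (a : ℕ) = k - 1)
    (hb : (b : ℕ) = k + 1) :
    (reducedLap (biCoconut p s1 s2)).mulVecLin (Pi.single w 1)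
      = (3 : ℤ) • Pi.single w (1 : ℤ) - Pi.single a 1 - Pi.single b 1 := by
  classical
  funext u
  have hcol : (reducedLap (biCoconut p s1 s2)).mulVecLin (Pi.single w 1) u
      = reducedLap (biCoconut p s1 s2) u w := by
    simp [Matrix.mulVecLin, Matrix.mulVec_single]
  rw [hcol, reducedLap_eq]
  have hadj := biCoconut_adj p s1 s2 k hk hkp u w hw
  have hdeg := biCoconut_degree p s1 s2 k hk hkp w hw
  simp only [SimpleGraph.lapMatrix, SimpleGraph.degMatrix, Matrix.add_apply,
    Matrix.sub_apply, Matrix.diagonal_apply, Matrix.one_apply,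
    SimpleGraph.adjMatrix_apply, hadj, Pi.add_apply, Pi.sub_apply, Pi.smul_apply]
  by_cases h1 : (u : ℕ) = k
  · have h2 : u = w := by apply Fin.ext; omega
    subst h2
    simp only [Pi.single_apply, Fin.ext_iff, hw, ha, hb, hdeg, smul_eq_mul]
    push_cast
    split_ifs <;> omega
  · simp only [Pi.single_apply, Fin.ext_iff, hw, ha, hb, smul_eq_mul]
    rw [if_neg h1, if_neg h1]
    split_ifs <;> omega

/-- Let `p ≥ 1`, `s1, s2 ≥ 1`, and let `L̄` be the reduced
Laplacian of `Cone(T(p,s1,s2))` with respect to the cone vertex. For every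
`2 ≤ i ≤ p`, the vector `e_{π_1} - F_{2i-2}·e_{π_{i-1}} + F_{2i-4}·e_{π_i}`
lies in the ℤ-span of the columns of `L̄` (the range of `v ↦ L̄ *ᵥ v`). -/
theorem relation_pi_one (p s1 s2 : ℕ) (hp : 1 ≤ p) (hs1 : 1 ≤ s1) (hs2 : 1 ≤ s2)
    (i : ℕ) (hi : 2 ≤ i) (hip : i ≤ p) :
    (Pi.single (⟨0, by omega⟩ : Fin (p + s1 + s2)) (1 : ℤ)
        - (Nat.fib (2 * i - 2) : ℤ) •
            Pi.single (⟨i - 2, by omega⟩ : Fin (p + s1 + s2)) (1 : ℤ)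
        + (Nat.fib (2 * i - 4) : ℤ) •
            Pi.single (⟨i - 1, by omega⟩ : Fin (p + s1 + s2)) (1 : ℤ)) ∈
      LinearMap.range (reducedLap (biCoconut p s1 s2)).mulVecLin := by
  induction i, hi using Nat.le_induction with
  | base =>
    refine ⟨0, ?_⟩
    rw [map_zero]
    funext u
    simp only [show 2 * 2 - 2 = 2 from rfl, show 2 * 2 - 4 = 0 from rfl,
      Nat.fib_two, Nat.fib_zero, Pi.add_apply, Pi.sub_apply, Pi.smul_apply,
      smul_eq_mul, Pi.single_apply, Fin.ext_iff, Fin.val_mk, Pi.zero_apply]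
    push_cast
    split_ifs <;> omega
  | succ i hi2 IH =>
    obtain ⟨y, hy⟩ := IH (by omega)
    refine ⟨y + (-(Nat.fib (2 * i - 2) : ℤ)) •
      Pi.single (⟨i - 1, by omega⟩ : Fin (p + s1 + s2)) 1, ?_⟩
    rw [map_add, hy, map_smul,
      reducedLap_col p s1 s2 (i - 1) (by omega) (by omega)
        ⟨i - 1, by omega⟩ ⟨i - 2, by omega⟩ ⟨i, by omega⟩ rfl
        (show i - 2 = i - 1 - 1 by omega) (show i = i - 1 + 1 by omega)]
    have e1 : 2 * (i + 1) - 2 = 2 * i := by omega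
    have e2 : 2 * (i + 1) - 4 = 2 * i - 2 := by omega
    rw [e1, e2]
    have hfib : (Nat.fib (2 * i) : ℤ)
        = 3 * Nat.fib (2 * i - 2) - Nat.fib (2 * i - 4) := by
      obtain ⟨j, rfl⟩ : ∃ j, i = j + 2 := ⟨i - 2, by omega⟩
      have h1 : 2 * (j + 2) = 2 * j + 4 := by omega
      have h2 : 2 * (j + 2) - 2 = 2 * j + 2 := by omega
      have h3 : 2 * (j + 2) - 4 = 2 * j := by omega
      have hnat : Nat.fib (2 * j + 4) + Nat.fib (2 * j)
          = 3 * Nat.fib (2 * j + 2) := by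
        have f1 := Nat.fib_add_two (n := 2 * j)
        have f2 := Nat.fib_add_two (n := 2 * j + 1)
        have f3 := Nat.fib_add_two (n := 2 * j + 2)
        rw [show 2 * j + 1 + 2 = 2 * j + 3 by omega,
          show 2 * j + 1 + 1 = 2 * j + 2 by omega] at f2
        rw [show 2 * j + 2 + 2 = 2 * j + 4 by omega,
          show 2 * j + 2 + 1 = 2 * j + 3 by omega] at f3
        omega
      rw [h3, h2, h1]
      omega
    funext u
    simp only [Pi.add_apply, Pi.sub_apply, Pi.smul_apply, smul_eq_mul,
      Pi.single_apply, Fin.ext_iff, Fin.val_mk, neg_mul]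
    split_ifs <;> omega
end

section
/- For all integers s1 ≥ 1 and p ≥ 1, the following two identities hold: b^{(s1)}_{2p−4} = 2·b^{(s1−1)}_{2p−4} + 2^{s1−1}·F_{2p−2}, and b^{(s1)}_{2p−3} = 2·b^{(s1−1)}_{2p−3} + 2^{s1−1}·(F_{2p} − F_{2p−2}). -/
lemma bSeq_key (s1 : ℕ) (hs1 : 1 ≤ s1) : ∀ n,
    bSeq s1 n = 2 * bSeq (s1 - 1) n + 2 ^ (s1 - 1) * (Nat.fib n : ℤ) := by
  intro n
  induction n using Nat.twoStepInduction with
  | zero =>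
    obtain ⟨t, rfl⟩ : ∃ t, s1 = t + 1 := ⟨s1 - 1, by omega⟩
    simp [bSeq, pow_succ]
    ring
  | one =>
    rcases Nat.eq_or_lt_of_le hs1 with h | h
    · simp [bSeq, ← h]
    · have h0 : s1 ≠ 0 := by omega
      have h1 : s1 - 1 ≠ 0 := by omega
      simp only [bSeq, h0, h1, if_false, Nat.fib_one, Nat.cast_one, mul_one]
      have : (s1 : ℤ) = ((s1 - 1 : ℕ) : ℤ) + 1 := by omega
      rw [this, show s1 - 1 = (s1 - 1 - 1) + 1 by omega]
      push_cast
      ring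
  | more n ih ih2 =>
    simp only [bSeq, Nat.fib_add_two, ih, ih2]
    push_cast
    ring

/-- For all integers `s1 ≥ 1` and `p ≥ 1`:
`b^{(s1)}_{2p-4} = 2 b^{(s1-1)}_{2p-4} + 2^{s1-1} F_{2p-2}` and
`b^{(s1)}_{2p-3} = 2 b^{(s1-1)}_{2p-3} + 2^{s1-1} (F_{2p} - F_{2p-2})`. -/
theorem bSeq_succ_s1 (s1 p : ℕ) (hs1 : 1 ≤ s1) (hp : 1 ≤ p) :
    bSeq s1 (2 * p - 2) =
      2 * bSeq (s1 - 1) (2 * p - 2) + 2 ^ (s1 - 1) * (Nat.fib (2 * p - 2) : ℤ) ∧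
    bSeq s1 (2 * p - 1) =
      2 * bSeq (s1 - 1) (2 * p - 1) +
        2 ^ (s1 - 1) * ((Nat.fib (2 * p) : ℤ) - (Nat.fib (2 * p - 2) : ℤ)) := by
  refine ⟨bSeq_key s1 hs1 _, ?_⟩
  obtain ⟨k, hk⟩ : ∃ k, 2 * p = k + 2 := ⟨2 * p - 2, by omega⟩
  have hfib : (Nat.fib (2 * p) : ℤ) - (Nat.fib (2 * p - 2) : ℤ) = Nat.fib (2 * p - 1) := by
    rw [hk, Nat.fib_add_two, show k+2-2 = k by omega, show k+2-1 = k+1 by omega]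
    push_cast; ring
  rw [hfib]
  exact bSeq_key s1 hs1 _
end

section
/- Let p ≥ 2 be an integer and let L̄ be the reduced Laplacian of the cone over the left comb tree T_p (with rows and columns indexed by π_1,…,π_p,ℓ_1,…,ℓ_{p−1} as in the context). Then the determinant of the (2p−2)×(2p−2) matrix obtained from L̄ by deleting the row and the column indexed by π_1 is an odd integer. -/
/-!
Each leaf `ℓ_j` is adjacent only to `π_{j+1}` and the cone vertex, so in the minor the
spine–leaf blocks are `-1` and the leaf–leaf block is `2`. Modulo 2 the minor is therefore
`[[A, -1], [-1, 0]]`, and any block matrix `[[A, B], [C, 0]]` with `B`, `C` invertible has a unit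
determinant: right multiplication by the involution `[[0, 1], [1, 0]]` makes it block triangular.
Hence the determinant is `1` in `ZMod 2`.
-/

/-- The reduced Laplacian of the cone over the left comb tree `T_p`, written
out explicitly: `Sum.inl i` is the spine vertex `π_{i+1}` (for `0 ≤ i < p`)
and `Sum.inr j` is the leaf `ℓ_{j+1}` (for `0 ≤ j < p-1`). -/
def combLap (p : ℕ) : Matrix (Fin p ⊕ Fin (p - 1)) (Fin p ⊕ Fin (p - 1)) ℤ :=
  fun u v =>
    match u, v with
    | Sum.inl i, Sum.inl j =>
        if i = j then
          (if (i : ℕ) = 0 then 2 else if (i : ℕ) = p - 1 then 3 else 4)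
        else if (i : ℕ) + 1 = (j : ℕ) ∨ (j : ℕ) + 1 = (i : ℕ) then -1 else 0
    | Sum.inl i, Sum.inr j => if (i : ℕ) = (j : ℕ) + 1 then -1 else 0
    | Sum.inr j, Sum.inl i => if (i : ℕ) = (j : ℕ) + 1 then -1 else 0
    | Sum.inr i, Sum.inr j => if i = j then 2 else 0

/-- The inclusion of the vertices other than `π_1`: `Sum.inl i ↦ π_{i+2}` and
`Sum.inr j ↦ ℓ_{j+1}`. -/
def delPiOne (p : ℕ) : Fin (p - 1) ⊕ Fin (p - 1) → Fin p ⊕ Fin (p - 1)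
  | Sum.inl i => Sum.inl ⟨(i : ℕ) + 1, by have := i.isLt; omega⟩
  | Sum.inr j => Sum.inr j

namespace Matrix

variable {m R : Type*} [Fintype m] [DecidableEq m] [CommRing R]

theorem det_fromBlocks_zero₂₂_mul_det_swap (A B C : Matrix m m R) :
    (fromBlocks A B C 0).det * (fromBlocks 0 1 1 0 : Matrix (m ⊕ m) (m ⊕ m) R).det =
      B.det * C.det := by
  rw [← det_mul, fromBlocks_multiply, ← det_fromBlocks_zero₂₁ B A C]
  simp

theorem isUnit_det_fromBlocks_zero₂₂ (A : Matrix m m R) {B C : Matrix m m R}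
    (hB : IsUnit B.det) (hC : IsUnit C.det) : IsUnit (fromBlocks A B C 0).det :=
  isUnit_of_mul_isUnit_left ((det_fromBlocks_zero₂₂_mul_det_swap A B C).symm ▸ hB.mul hC)

end Matrix

open Matrix

section

variable (p : ℕ)

theorem combLap_minor_toBlocks₁₂ :
    ((combLap p).submatrix (delPiOne p) (delPiOne p)).toBlocks₁₂ = -1 := by
  ext i j
  simp [toBlocks₁₂, delPiOne, combLap, one_apply, Fin.ext_iff, apply_ite]

theorem combLap_minor_toBlocks₂₁ :
    ((combLap p).submatrix (delPiOne p) (delPiOne p)).toBlocks₂₁ = -1 := by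
  ext i j
  simp [toBlocks₂₁, delPiOne, combLap, one_apply, Fin.ext_iff, eq_comm, apply_ite]

theorem combLap_minor_toBlocks₂₂ :
    ((combLap p).submatrix (delPiOne p) (delPiOne p)).toBlocks₂₂ = 2 := by
  ext i j
  simp [toBlocks₂₂, delPiOne, combLap, ofNat_apply]

theorem combLap_minor_map_zmod_two :
    ((combLap p).submatrix (delPiOne p) (delPiOne p)).map (Int.castRingHom (ZMod 2)) =
      fromBlocks (((combLap p).submatrix (delPiOne p) (delPiOne p)).toBlocks₁₁.map
        (Int.castRingHom (ZMod 2))) (-1) (-1) 0 := by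
  rw [← fromBlocks_toBlocks ((combLap p).submatrix (delPiOne p) (delPiOne p)), fromBlocks_map,
    combLap_minor_toBlocks₁₂, combLap_minor_toBlocks₂₁, combLap_minor_toBlocks₂₂]
  have hneg : (-1 : Matrix (Fin (p - 1)) (Fin (p - 1)) ℤ).map (Int.castRingHom (ZMod 2)) = -1 := by
    rw [← RingHom.mapMatrix_apply, map_neg, map_one]
  have htwo : (2 : Matrix (Fin (p - 1)) (Fin (p - 1)) ℤ).map (Int.castRingHom (ZMod 2)) = 0 := by
    rw [Matrix.map_ofNat (map_zero _)]
    exact diagonal_zero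
  rw [hneg, htwo, toBlocks_fromBlocks₁₁]

end

theorem combLap_minor_pi_one_odd_general (p : ℕ) :
    Odd ((combLap p).submatrix (delPiOne p) (delPiOne p)).det := by
  set M := (combLap p).submatrix (delPiOne p) (delPiOne p)
  have hunit : IsUnit (M.det : ZMod 2) := by
    rw [← eq_intCast (Int.castRingHom (ZMod 2)), RingHom.map_det, RingHom.mapMatrix_apply,
      combLap_minor_map_zmod_two]
    have hneg : IsUnit (-1 : Matrix (Fin (p - 1)) (Fin (p - 1)) (ZMod 2)).det :=
      (isUnit_iff_isUnit_det _).mp isUnit_neg_one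
    exact isUnit_det_fromBlocks_zero₂₂ _ hneg hneg
  exact Int.not_even_iff_odd.mp fun h => hunit.ne_zero (ZMod.intCast_eq_zero_iff_even.mpr h)

/-- For `p ≥ 2`, the determinant of the matrix obtained from
the reduced Laplacian of `Cone(T_p)` by deleting the row and column indexed by
`π_1` is odd. -/
theorem combLap_minor_pi_one_odd (p : ℕ) (hp : 2 ≤ p) :
    Odd ((combLap p).submatrix (delPiOne p) (delPiOne p)).det :=
  combLap_minor_pi_one_odd_general p
end

section
/- Let p ≥ 2 be an integer and let L̄ be the reduced Laplacian of the cone over the left comb tree T_p (with rows and columns indexed by π_1,…,π_p,ℓ_1,…,ℓ_{p−1} as in the context). Then the determinant of the (2p−2)×(2p−2) matrix obtained from L̄ by deleting the row indexed by π_1 and the column indexed by ℓ_{p−1} equals 2^{p−2} or −2^{p−2}. -/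
/-- Enumeration of the rows other than `π_1`: the first `p-1` indices give
`π_2, …, π_p` and the remaining `p-1` indices give `ℓ_1, …, ℓ_{p-1}`. -/
def rowsDelPiOne (p : ℕ) (k : Fin (2 * p - 2)) : Fin p ⊕ Fin (p - 1) :=
  if h : (k : ℕ) < p - 1 then Sum.inl ⟨(k : ℕ) + 1, by omega⟩
  else Sum.inr ⟨(k : ℕ) - (p - 1), by have := k.isLt; omega⟩

/-- Enumeration of the columns other than `ℓ_{p-1}`: the first `p` indices give
`π_1, …, π_p` and the remaining `p-2` indices give `ℓ_1, …, ℓ_{p-2}`. -/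
def colsDelLast (p : ℕ) (k : Fin (2 * p - 2)) : Fin p ⊕ Fin (p - 1) :=
  if h : (k : ℕ) < p then Sum.inl ⟨(k : ℕ), h⟩
  else Sum.inr ⟨(k : ℕ) - p, by have := k.isLt; omega⟩

def erFun (p : ℕ) (k : Fin (2 * p - 2)) : Fin (2 * p - 2) :=
  ⟨if (k : ℕ) % 2 = 1 then p - 2 - (k : ℕ) / 2 else 2 * p - 3 - (k : ℕ) / 2,
   by have := k.isLt; split <;> omega⟩

def ecFun (p : ℕ) (k : Fin (2 * p - 2)) : Fin (2 * p - 2) :=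
  ⟨if (k : ℕ) = 0 then p - 1 else
     if (k : ℕ) % 2 = 1 then p - 2 - (k : ℕ) / 2 else 2 * p - 2 - (k : ℕ) / 2,
   by have := k.isLt; split; · omega
      split <;> omega⟩

lemma rowsErFun (p : ℕ) (i : Fin (2 * p - 2)) :
    (∃ a : Fin p, (a : ℕ) = p - 1 - (i : ℕ) / 2 ∧ (i : ℕ) % 2 = 1 ∧
      rowsDelPiOne p (erFun p i) = Sum.inl a) ∨
    (∃ b : Fin (p - 1), (b : ℕ) = p - 2 - (i : ℕ) / 2 ∧ (i : ℕ) % 2 = 0 ∧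
      rowsDelPiOne p (erFun p i) = Sum.inr b) := by
  have hi := i.isLt
  by_cases h : (i : ℕ) % 2 = 1
  · left
    refine ⟨⟨p - 1 - (i : ℕ) / 2, by omega⟩, rfl, h, ?_⟩
    simp only [rowsDelPiOne, erFun, h, if_true, ite_true, reduceIte]
    rw [dif_pos (by omega)]
    simp only [Sum.inl.injEq, Fin.mk.injEq]
    omega
  · right
    refine ⟨⟨p - 2 - (i : ℕ) / 2, by omega⟩, rfl, by omega, ?_⟩
    simp only [rowsDelPiOne, erFun, h, if_false, ite_false, reduceIte]
    rw [dif_neg (by omega)]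
    simp only [Sum.inr.injEq, Fin.mk.injEq]
    omega

lemma colsEcFun (p : ℕ) (j : Fin (2 * p - 2)) :
    (∃ a : Fin p, (a : ℕ) = p - 1 ∧ (j : ℕ) = 0 ∧
      colsDelLast p (ecFun p j) = Sum.inl a) ∨
    (∃ a : Fin p, (a : ℕ) = p - 2 - (j : ℕ) / 2 ∧ (j : ℕ) % 2 = 1 ∧
      colsDelLast p (ecFun p j) = Sum.inl a) ∨
    (∃ b : Fin (p - 1), (b : ℕ) = p - 2 - (j : ℕ) / 2 ∧ (j : ℕ) ≠ 0 ∧ (j : ℕ) % 2 = 0 ∧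
      colsDelLast p (ecFun p j) = Sum.inr b) := by
  have hj := j.isLt
  by_cases h0 : (j : ℕ) = 0
  · left
    refine ⟨⟨p - 1, by omega⟩, rfl, h0, ?_⟩
    simp only [colsDelLast, ecFun, h0, if_true, ite_true, reduceIte]
    rw [dif_pos (by omega)]
  · by_cases h1 : (j : ℕ) % 2 = 1
    · right; left
      refine ⟨⟨p - 2 - (j : ℕ) / 2, by omega⟩, rfl, h1, ?_⟩
      simp only [colsDelLast, ecFun, h0, h1, if_true, if_false, ite_true, ite_false, reduceIte]
      rw [dif_pos (by omega)]
    · right; right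
      refine ⟨⟨p - 2 - (j : ℕ) / 2, by omega⟩, rfl, h0, by omega, ?_⟩
      simp only [colsDelLast, ecFun, h0, h1, if_true, if_false, ite_true, ite_false, reduceIte]
      rw [dif_neg (by omega)]
      simp only [Sum.inr.injEq, Fin.mk.injEq]
      omega

lemma tri (p : ℕ) (i j : Fin (2 * p - 2)) (hij : (i : ℕ) < (j : ℕ)) :
    combLap p (rowsDelPiOne p (erFun p i)) (colsDelLast p (ecFun p j)) = 0 := by
  have hi := i.isLt; have hj := j.isLt
  rcases rowsErFun p i with ⟨a, ha, hi2, hrw⟩ | ⟨a, ha, hi2, hrw⟩ <;>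
    rcases colsEcFun p j with ⟨c, hc, hj2, hcw⟩ | ⟨c, hc, hj2, hcw⟩ | ⟨c, hc, hj2, hj3, hcw⟩ <;>
    rw [hrw, hcw] <;>
    have hal := a.isLt <;> have hcl := c.isLt <;>
    simp only [combLap, Fin.ext_iff] <;>
    split_ifs <;> omega

lemma diag (p : ℕ) (i : Fin (2 * p - 2)) :
    combLap p (rowsDelPiOne p (erFun p i)) (colsDelLast p (ecFun p i)) =
      if 2 ≤ (i : ℕ) ∧ (i : ℕ) % 2 = 0 then 2 else -1 := by
  have hi := i.isLt
  rcases rowsErFun p i with ⟨a, ha, hi2, hrw⟩ | ⟨a, ha, hi2, hrw⟩ <;>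
    rcases colsEcFun p i with ⟨c, hc, hj2, hcw⟩ | ⟨c, hc, hj2, hcw⟩ | ⟨c, hc, hj2, hj3, hcw⟩ <;>
    rw [hrw, hcw] <;>
    have hal := a.isLt <;> have hcl := c.isLt <;>
    simp only [combLap, Fin.ext_iff] <;>
    split_ifs <;> omega

lemma erFun_inj (p : ℕ) : Function.Injective (erFun p) := by
  intro a b h
  have h' := congrArg Fin.val h
  have ha := a.isLt; have hb := b.isLt
  simp only [erFun] at h'
  apply Fin.ext
  split_ifs at h' <;> omega

lemma ecFun_inj (p : ℕ) : Function.Injective (ecFun p) := by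
  intro a b h
  have h' := congrArg Fin.val h
  have ha := a.isLt; have hb := b.isLt
  simp only [ecFun] at h'
  apply Fin.ext
  split_ifs at h' <;> omega

lemma prodD (n : ℕ) : ∃ s : ℤ, (s = 1 ∨ s = -1) ∧
    (∏ k : Fin n, (if 2 ≤ (k : ℕ) ∧ (k : ℕ) % 2 = 0 then (2 : ℤ) else -1)) =
      s * 2 ^ ((n + 1) / 2 - 1) := by
  induction n with
  | zero => exact ⟨1, Or.inl rfl, by simp⟩
  | succ n ih =>
    obtain ⟨s, hs, hprod⟩ := ih
    rw [Fin.prod_univ_castSucc]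
    simp only [Fin.coe_castSucc, Fin.val_last, hprod]
    by_cases hc : 2 ≤ n ∧ n % 2 = 0
    · refine ⟨s, hs, ?_⟩
      rw [if_pos hc]
      have he : (n + 1 + 1) / 2 - 1 = ((n + 1) / 2 - 1) + 1 := by omega
      rw [he, pow_succ]
      ring
    · refine ⟨-s, by rcases hs with rfl | rfl <;> simp, ?_⟩
      rw [if_neg hc]
      have he : (n + 1 + 1) / 2 - 1 = (n + 1) / 2 - 1 := by omega
      rw [he]
      ring

/-- For `p ≥ 2`, the determinant of the matrix obtained from
the reduced Laplacian of `Cone(T_p)` by deleting the row indexed by `π_1` and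
the column indexed by `ℓ_{p-1}` equals `2^{p-2}` or `-2^{p-2}`. -/
theorem combLap_minor_pi_one_ell_last (p : ℕ) (hp : 2 ≤ p) :
    ((combLap p).submatrix (rowsDelPiOne p) (colsDelLast p)).det = 2 ^ (p - 2) ∨
    ((combLap p).submatrix (rowsDelPiOne p) (colsDelLast p)).det = -2 ^ (p - 2) := by
  set A := (combLap p).submatrix (rowsDelPiOne p) (colsDelLast p) with hA
  let er : Fin (2 * p - 2) ≃ Fin (2 * p - 2) :=
    Equiv.ofBijective _ (Finite.injective_iff_bijective.mp (erFun_inj p))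
  let ec : Fin (2 * p - 2) ≃ Fin (2 * p - 2) :=
    Equiv.ofBijective _ (Finite.injective_iff_bijective.mp (ecFun_inj p))
  have habs : |(A.submatrix er ec).det| = |A.det| :=
    Matrix.abs_det_submatrix_equiv_equiv er ec A
  have hbt : (A.submatrix er ec).BlockTriangular OrderDual.toDual := by
    intro i j hij
    exact tri p i j hij
  have hdet : (A.submatrix er ec).det =
      ∏ i : Fin (2 * p - 2), (if 2 ≤ (i : ℕ) ∧ (i : ℕ) % 2 = 0 then (2 : ℤ) else -1) := by
    rw [Matrix.det_of_lowerTriangular _ hbt]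
    exact Finset.prod_congr rfl fun i _ => diag p i
  obtain ⟨s, hs, hprod⟩ := prodD (2 * p - 2)
  have hexp : (2 * p - 2 + 1) / 2 - 1 = p - 2 := by omega
  rw [hprod, hexp] at hdet
  have habs2 : |A.det| = 2 ^ (p - 2) := by
    rw [← habs, hdet]
    rcases hs with rfl | rfl <;> simp [abs_of_nonneg, pow_nonneg]
  have := (abs_eq (by positivity : (0 : ℤ) ≤ 2 ^ (p - 2))).mp habs2
  rcases this with h | h
  · exact Or.inl h
  · exact Or.inr h
end
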